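/- arXiv:2307.00423 — 2 statements merged into one kernel-verified Lean document; each statement's English description precedes it below -/
import Mathlib

section
/- Let n ≥ 2, let F ∈ ℚ[t] and let k ∈ {0,…,n−2}. Then in ℚ[t_1,…,t_n], Θ((F(t_2) − F(t_1)) · t_1^{n−2} t_2^{k} · ∏_{j=3}^n t_j^{n−j}) equals −q_k if k ≤ n−3, and equals −2·q_{n−2} if k = n−2. -/
open MvPolynomial

/-- `q_i`: the determinant of the `n × n` matrix whose first row is
`(F(t₁)t₁^i, …, F(t_n)t_n^i)` and whose `r`-th row (`1 ≤ r ≤ n−1`, 0-based) is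
`(t₁^{n−1−r}, …, t_n^{n−1−r})`. -/
noncomputable def qdet (n : ℕ) (F : Polynomial ℚ) (i : ℕ) : MvPolynomial (Fin n) ℚ :=
  (Matrix.of fun r c : Fin n =>
    if (r : ℕ) = 0 then Polynomial.aeval (X c) F * X c ^ i
    else X c ^ (n - 1 - (r : ℕ))).det

/-- The antisymmetrisation operator `Θ(p) = Σ_{σ ∈ S_n} sign(σ) · σ∗p`, where
`σ∗p` permutes the variables of `p` by `σ`. -/
noncomputable def theta (n : ℕ) (p : MvPolynomial (Fin n) ℚ) : MvPolynomial (Fin n) ℚ :=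
  ∑ σ : Equiv.Perm (Fin n), (Equiv.Perm.sign σ : ℤ) • rename σ p

/-!
The antisymmetrisation of a product `∏_c f_c(t_c)` of one-variable polynomials is, by the
Leibniz formula, the determinant `det (f_r(t_c))`. By linearity of `Θ` the claim splits
into two such determinants. The `F(t₂)` term gives the matrix of `q_k` with its first two rows
swapped, hence `-q_k`. The `F(t₁)` term gives a matrix with the row `t^k` in positions `2` and
`n - k`, hence `0`, unless `k = n - 2`, when it is exactly the matrix of `q_{n-2}`.
-/

open Equiv Matrix

section Antisymmetrisation

variable {ι R : Type*} [Fintype ι] [DecidableEq ι] [CommRing R]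

theorem sum_sign_smul_rename_prod_aeval (f : ι → Polynomial R) :
    ∑ σ : Perm ι, (Perm.sign σ : ℤ) • rename σ (∏ c, Polynomial.aeval (X c) (f c))
      = (of fun r c => Polynomial.aeval (X c : MvPolynomial ι R) (f r)).det := by
  rw [det_apply]
  refine Fintype.sum_equiv (Equiv.inv _) _ _ fun σ => ?_
  have hrename : rename σ (∏ c, Polynomial.aeval (X c : MvPolynomial ι R) (f c))
      = ∏ d, Polynomial.aeval (X d) (f (σ⁻¹ d)) := by
    simp only [map_prod, ← Polynomial.aeval_algHom_apply, rename_X]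
    exact Fintype.prod_equiv σ _ _ fun c => by simp
  simp [hrename, Units.smul_def]

theorem aeval_X_mul_prod_X_pow (F : Polynomial R) (a : ι) (e : ι → ℕ) :
    Polynomial.aeval (X a) F * ∏ c, (X c : MvPolynomial ι R) ^ e c
      = ∏ c, Polynomial.aeval (X c) ((if c = a then F else 1) * Polynomial.X ^ e c) := by
  simp only [map_mul, Polynomial.aeval_X_pow, apply_ite (Polynomial.aeval _), map_one,
    Finset.prod_mul_distrib, Finset.prod_ite_eq', Finset.mem_univ, if_true]

end Antisymmetrisation

theorem theta_sub (n : ℕ) (p q : MvPolynomial (Fin n) ℚ) :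
    theta n (p - q) = theta n p - theta n q := by
  simp only [theta, map_sub, smul_sub, Finset.sum_sub_distrib]

theorem theta_aeval_X_mul_prod_X_pow (n : ℕ) (F : Polynomial ℚ) (a : Fin n) (e : Fin n → ℕ) :
    theta n (Polynomial.aeval (X a) F * ∏ c, X c ^ e c)
      = (of fun r c => (if r = a then Polynomial.aeval (X c) F else 1) * X c ^ e r).det := by
  rw [theta, aeval_X_mul_prod_X_pow, sum_sign_smul_rename_prod_aeval]
  congr 1
  ext r c : 1
  simp [apply_ite (Polynomial.aeval _)]

abbrev staircaseExp (n k : ℕ) (c : Fin n) : ℕ :=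
  if (c : ℕ) = 0 then n - 2 else if (c : ℕ) = 1 then k else n - 1 - (c : ℕ)

section Staircase

variable {n : ℕ} (F : Polynomial ℚ) (k : ℕ)

theorem theta_aeval_X_one_mul_staircase (hn : 2 ≤ n) :
    theta n (Polynomial.aeval (X (⟨1, hn⟩ : Fin n)) F * ∏ c, X c ^ staircaseExp n k c)
      = -qdet n F k := by
  set i0 : Fin n := ⟨0, Nat.zero_lt_of_lt hn⟩
  set i1 : Fin n := ⟨1, hn⟩
  have h01 : i0 ≠ i1 := by simp [i0, i1, Fin.ext_iff]
  rw [theta_aeval_X_mul_prod_X_pow, qdet, ← neg_one_mul,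
    show (-1 : MvPolynomial (Fin n) ℚ) = ((Perm.sign (swap i0 i1) : ℤ) : MvPolynomial (Fin n) ℚ)
      by simp [Perm.sign_swap h01], ← det_permute]
  congr 1
  ext r c : 1
  rcases eq_or_ne r i0 with rfl | hr0
  · simp [i0, i1, staircaseExp, show n - 1 - 1 = n - 2 by omega]
  rcases eq_or_ne r i1 with rfl | hr1
  · simp [i0, i1, staircaseExp]
  have hr0' : (r : ℕ) ≠ 0 := fun h => hr0 (Fin.ext h)
  have hr1' : (r : ℕ) ≠ 1 := fun h => hr1 (Fin.ext h)
  simp [swap_apply_of_ne_of_ne hr0 hr1, hr1, hr0', hr1', staircaseExp]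

theorem theta_aeval_X_zero_mul_staircase_of_lt (hk : k + 3 ≤ n) :
    theta n (Polynomial.aeval (X (⟨0, Nat.zero_lt_of_lt hk⟩ : Fin n)) F
        * ∏ c, X c ^ staircaseExp n k c)
      = 0 := by
  rw [theta_aeval_X_mul_prod_X_pow]
  refine det_zero_of_row_eq (i := ⟨1, by omega⟩) (j := ⟨n - 1 - k, by omega⟩)
    (by simp [Fin.ext_iff]; omega) (funext fun c => ?_)
  have h0 : n - 1 - k ≠ 0 := by omega
  have h1 : n - 1 - k ≠ 1 := by omega
  simp [staircaseExp, h0, h1, show n - 1 - (n - 1 - k) = k by omega]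

theorem theta_aeval_X_zero_mul_staircase_self (hn : 2 ≤ n) :
    theta n (Polynomial.aeval (X (⟨0, Nat.zero_lt_of_lt hn⟩ : Fin n)) F
        * ∏ c, X c ^ staircaseExp n (n - 2) c)
      = qdet n F (n - 2) := by
  rw [theta_aeval_X_mul_prod_X_pow, qdet]
  congr 1
  ext r c : 1
  by_cases hr0 : (r : ℕ) = 0
  · simp [Fin.ext_iff, hr0, staircaseExp]
  by_cases hr1 : (r : ℕ) = 1
  · simp [Fin.ext_iff, hr1, staircaseExp, show n - 1 - 1 = n - 2 by omega]
  · simp [Fin.ext_iff, hr0, hr1, staircaseExp]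

end Staircase

/-- Let `n ≥ 2`, `F ∈ ℚ[t]` and `k ∈ {0,…,n−2}`.  Then
`Θ((F(t₂) − F(t₁)) · t₁^{n−2} t₂^k · ∏_{j=3}^n t_j^{n−j})` equals `−q_k` if `k ≤ n−3`
and `−2·q_{n−2}` if `k = n−2`. -/
theorem stmt13 (n : ℕ) (hn : 2 ≤ n) (F : Polynomial ℚ) (k : ℕ) :
    (k + 3 ≤ n →
      theta n ((Polynomial.aeval (X (⟨1, by omega⟩ : Fin n)) F
          - Polynomial.aeval (X (⟨0, by omega⟩ : Fin n)) F)
        * ∏ c : Fin n, X c ^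
            (if (c : ℕ) = 0 then n - 2 else if (c : ℕ) = 1 then k else n - 1 - (c : ℕ)))
        = -qdet n F k)
    ∧ (k + 2 = n →
      theta n ((Polynomial.aeval (X (⟨1, by omega⟩ : Fin n)) F
          - Polynomial.aeval (X (⟨0, by omega⟩ : Fin n)) F)
        * ∏ c : Fin n, X c ^
            (if (c : ℕ) = 0 then n - 2 else if (c : ℕ) = 1 then k else n - 1 - (c : ℕ)))
        = -(2 : MvPolynomial (Fin n) ℚ) * qdet n F (n - 2)) := by
  rw [sub_mul, theta_sub, theta_aeval_X_one_mul_staircase F k hn]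
  refine ⟨fun hk => ?_, fun hk => ?_⟩
  · rw [theta_aeval_X_zero_mul_staircase_of_lt F k hk, sub_zero]
  · obtain rfl : k = n - 2 := by omega
    rw [theta_aeval_X_zero_mul_staircase_self F hn]
    ring
end

section
/- Let n ≥ 3, let F ∈ ℚ[t], and let k_1,…,k_n be integers with 0 ≤ k_j ≤ n−j for every j ∈ {1,…,n}. If there exists some j ∈ {3,…,n} with k_j ≠ n−j, then Θ((F(t_2) − F(t_1)) · t_1^{k_1} t_2^{k_2} ⋯ t_n^{k_n}) = 0 in ℚ[t_1,…,t_n]. -/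
/-!
Pigeonhole: on the indices `j ≥ j₀` the exponents are bounded by `n − 1 − j₀`, and strictly
so at `j₀` itself, so two of these `n − j₀` indices carry the same exponent. The transposition
of such a pair fixes `t₁`, `t₂` and the monomial, so it fixes the antisymmetrised polynomial,
which is therefore equal to its own negative.
-/

open MvPolynomial

lemma theta_eq_zero_of_rename_swap {n : ℕ} {p : MvPolynomial (Fin n) ℚ} {i j : Fin n}
    (hij : i ≠ j) (hp : rename (Equiv.swap i j) p = p) : theta n p = 0 := by
  have h_neg : theta n p = -theta n p := by
    rw [← neg_eq_iff_eq_neg, theta, ← Finset.sum_neg_distrib]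
    refine Fintype.sum_equiv (Equiv.mulRight (Equiv.swap i j)) _ _ fun σ => ?_
    simp only [Equiv.coe_mulRight, Equiv.Perm.sign_mul, Equiv.Perm.sign_swap hij,
      Equiv.Perm.coe_mul, ← rename_rename, hp]
    push_cast
    rw [mul_neg_one, neg_smul]
  exact CharZero.eq_neg_self_iff.mp h_neg

lemma exists_ne_map_eq_of_le_sub {n : ℕ} {k : Fin n → ℕ} (hk : ∀ j : Fin n, k j ≤ n - 1 - j)
    {j₀ : Fin n} (hj₀ : k j₀ ≠ n - 1 - j₀) :
    ∃ a b : Fin n, j₀ ≤ a ∧ j₀ ≤ b ∧ a ≠ b ∧ k a = k b := by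
  have hmaps : ∀ c ∈ Finset.Ici j₀, k c ∈ Finset.range (n - 1 - j₀) := by
    intro c hc
    rw [Finset.mem_Ici] at hc
    obtain rfl | hlt := hc.eq_or_lt
    · exact Finset.mem_range.mpr (lt_of_le_of_ne (hk _) hj₀)
    · rw [Finset.mem_range]
      have := hk c
      have : (j₀ : ℕ) < c := hlt
      omega
  have hcard : (Finset.range (n - 1 - j₀)).card < (Finset.Ici j₀).card := by
    rw [Finset.card_range, Fin.card_Ici]
    omega
  obtain ⟨a, ha, b, hb, hab, hkab⟩ := Finset.exists_ne_map_eq_of_card_lt_of_maps_to hcard hmaps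
  exact ⟨a, b, Finset.mem_Ici.mp ha, Finset.mem_Ici.mp hb, hab, hkab⟩

lemma MvPolynomial.rename_aeval_X {σ τ R : Type*} [CommSemiring R] (f : σ → τ)
    (F : Polynomial R) (i : σ) :
    rename f (Polynomial.aeval (X i : MvPolynomial σ R) F) = Polynomial.aeval (X (f i)) F := by
  rw [← Polynomial.aeval_algHom_apply, rename_X]

lemma MvPolynomial.rename_prod_X_pow_of_comp_eq {σ R : Type*} [Fintype σ] [CommSemiring R]
    (e : Equiv.Perm σ) {k : σ → ℕ} (hk : ∀ c, k (e c) = k c) :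
    rename e (∏ c, X c ^ k c : MvPolynomial σ R) = ∏ c, X c ^ k c := by
  simp only [map_prod, map_pow, rename_X]
  exact Fintype.prod_equiv e _ _ fun c => by rw [hk c]

/-- Let `n ≥ 3`, `F ∈ ℚ[t]` and `k₁,…,k_n` with `0 ≤ k_j ≤ n−j`.  If some `j ∈ {3,…,n}`
has `k_j ≠ n−j`, then `Θ((F(t₂) − F(t₁)) · t₁^{k₁} ⋯ t_n^{k_n}) = 0`.
(0-based: index `j` corresponds to the variable `t_{j+1}`, with exponent bound `n−1−j`.) -/
theorem stmt14 (n : ℕ) (hn : 3 ≤ n) (F : Polynomial ℚ) (k : Fin n → ℕ)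
    (hk : ∀ j : Fin n, k j ≤ n - 1 - (j : ℕ))
    (hex : ∃ j : Fin n, 2 ≤ (j : ℕ) ∧ k j ≠ n - 1 - (j : ℕ)) :
    theta n ((Polynomial.aeval (X (⟨1, by omega⟩ : Fin n)) F
        - Polynomial.aeval (X (⟨0, by omega⟩ : Fin n)) F)
      * ∏ c : Fin n, X c ^ k c) = 0 := by
  obtain ⟨j₀, hj₀, hkj₀⟩ := hex
  obtain ⟨a, b, ha, hb, hab, hkab⟩ := exists_ne_map_eq_of_le_sub hk hkj₀
  have hfix : ∀ c : Fin n, (c : ℕ) < 2 → Equiv.swap a b c = c := fun c hc =>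
    Equiv.swap_apply_of_ne_of_ne (by rintro rfl; exact absurd ha (by omega))
      (by rintro rfl; exact absurd hb (by omega))
  have hk_swap : ∀ c, k (Equiv.swap a b c) = k c := by
    intro c
    rw [Equiv.swap_apply_def]
    split_ifs with hca hcb
    · rw [hca, hkab]
    · rw [hcb, hkab]
    · rfl
  refine theta_eq_zero_of_rename_swap hab ?_
  rw [map_mul, map_sub, rename_aeval_X, rename_aeval_X, hfix _ (by simp), hfix _ (by simp),
    rename_prod_X_pow_of_comp_eq _ hk_swap]
end
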